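/- Product rule for Quasi Differential Quotients: let F, G : ℝ^n ⇝ ℝ be set-valued maps, x̄ ∈ ℝ^n, ȳ_F, ȳ_G ∈ ℝ, Γ_F, Γ_G ⊆ ℝ^n. If Λ_F is a Quasi Differential Quotient of F at (x̄, ȳ_F) in the direction of Γ_F and Λ_G is a Quasi Differential Quotient of G at (x̄, ȳ_G) in the direction of Γ_G, then the set ȳ_F Λ_G + ȳ_G Λ_F := {ȳ_F L₂ + ȳ_G L₁ : L₁ ∈ Λ_F, L₂ ∈ Λ_G} is a Quasi Differential Quotient of the set-valued map FG : x ⇝ {y₁·y₂ : y₁ ∈ F(x), y₂ ∈ G(x)} at (x̄, ȳ_F·ȳ_G) in the direction of Γ_F ∩ Γ_G. -/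

import Mathlib

open Metric Set Filter Topology

/-- A modulus: a non-decreasing non-negative function `ρ : [0,∞) → [0,∞)`
with `ρ(δ) → 0` as `δ → 0⁺`. -/
def IsModulus (ρ : ℝ → ℝ) : Prop :=
  (∀ δ, 0 ≤ ρ δ) ∧ MonotoneOn ρ (Set.Ici 0) ∧
    Filter.Tendsto ρ (nhdsWithin 0 (Set.Ioi 0)) (nhds 0)

/-- `Λ` is a Quasi Differential Quotient (QDQ) of the set-valued map `Fm` at `(xb, yb)`
in the direction of `Γ`. -/
def IsQDQ {E F : Type*} [NormedAddCommGroup E] [NormedSpace ℝ E]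
    [NormedAddCommGroup F] [NormedSpace ℝ F]
    (Fm : E → Set F) (xb : E) (yb : F) (Γ : Set E) (Λ : Set (E →L[ℝ] F)) : Prop :=
  IsCompact Λ ∧
  ∃ δs : ℝ, 0 < δs ∧ ∃ ρ : ℝ → ℝ, IsModulus ρ ∧
    ∀ δ : ℝ, 0 < δ → δ < δs →
      ∃ (L : E → E →L[ℝ] F) (h : E → F),
        ContinuousOn (fun x => (L x, h x)) (Metric.closedBall xb δ ∩ Γ) ∧
        ∀ x ∈ Metric.closedBall xb δ ∩ Γ,
          Metric.infDist (L x) Λ ≤ ρ δ ∧ ‖h x‖ ≤ δ * ρ δ ∧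
          yb + (L x) (x - xb) + h x ∈ Fm x

/-!
Write the selections of `F` and `G` at scale `δ` as `y₁ = ȳ_F + L_F(x)(x - x̄) + h_F(x)` and
`y₂ = ȳ_G + L_G(x)(x - x̄) + h_G(x)`. Then `y₁ y₂ = ȳ_F ȳ_G + L(x)(x - x̄) + h(x)` with
`L = y₂ L_F + (ȳ_F + h_F) L_G` and `h = ȳ_F h_G + ȳ_G h_F + h_F h_G`. Absorbing the quadratic
term into the linear part keeps `h` of order `δ (ρ_F + ρ_G + δ)` with no bound on `L_F, L_G`,
while `y₂ - ȳ_G = O(δ)` and `h_F = O(δ)` put `L` within `O(ρ_F + ρ_G + δ)` of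
`ȳ_F Λ_G + ȳ_G Λ_F`.
-/

namespace IsModulus

lemma add {ρ ρ' : ℝ → ℝ} (hρ : IsModulus ρ) (hρ' : IsModulus ρ') :
    IsModulus fun δ => ρ δ + ρ' δ := by
  obtain ⟨hρ0, hρm, hρt⟩ := hρ
  obtain ⟨hρ'0, hρ'm, hρ't⟩ := hρ'
  refine ⟨fun δ => add_nonneg (hρ0 δ) (hρ'0 δ), hρm.add hρ'm, ?_⟩
  simpa using hρt.add hρ't

lemma comp {ρ f : ℝ → ℝ} (hρ : IsModulus ρ) (hf0 : f 0 = 0) (hfm : MonotoneOn f (Ici 0))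
    (hfc : ContinuousWithinAt f (Ici 0) 0) : IsModulus fun δ => f (ρ δ) := by
  obtain ⟨hρ0, hρm, hρt⟩ := hρ
  refine ⟨fun δ => hf0 ▸ hfm self_mem_Ici (hρ0 δ) (hρ0 δ),
    fun a ha b hb hab => hfm (hρ0 a) (hρ0 b) (hρm ha hb hab), ?_⟩
  have hρt' : Tendsto ρ (𝓝[>] 0) (𝓝[Ici 0] 0) :=
    tendsto_nhdsWithin_iff.mpr ⟨hρt, Eventually.of_forall hρ0⟩
  simpa [hf0, Function.comp_def] using hfc.tendsto.comp hρt'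

end IsModulus

lemma isModulus_max_zero : IsModulus fun δ => max δ 0 := by
  refine ⟨fun δ => le_max_right δ 0, fun _ _ _ _ hab => max_le_max hab le_rfl, ?_⟩
  have h : Tendsto (fun δ : ℝ => max δ 0) (𝓝 0) (𝓝 0) :=
    (continuous_id.max continuous_const).tendsto' 0 0 (max_self 0)
  exact h.mono_left nhdsWithin_le_nhds

lemma isCompact_setOf_smul_add_smul {R V : Type*} [TopologicalSpace V] [Add V] [SMul R V]
    [ContinuousAdd V] [ContinuousConstSMul R V] {A B : Set V} (hA : IsCompact A)
    (hB : IsCompact B) (a b : R) : IsCompact {z | ∃ x ∈ A, ∃ y ∈ B, z = a • y + b • x} := by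
  convert (hA.prod hB).image
    ((continuous_snd.const_smul a).add (continuous_fst.const_smul b)) using 1
  ext z
  constructor
  · rintro ⟨x, hx, y, hy, rfl⟩
    exact ⟨(x, y), ⟨hx, hy⟩, rfl⟩
  · rintro ⟨⟨x, y⟩, ⟨hx, hy⟩, rfl⟩
    exact ⟨x, hx, y, hy, rfl⟩

lemma IsCompact.exists_norm_sub_le_of_infDist_le {V : Type*} [SeminormedAddCommGroup V]
    {Λ : Set V} (hΛ : IsCompact Λ) (hne : Λ.Nonempty) {L : V} {r : ℝ}
    (h : infDist L Λ ≤ r) : ∃ L₁ ∈ Λ, ‖L - L₁‖ ≤ r := by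
  obtain ⟨L₁, hL₁, hd⟩ := hΛ.exists_infDist_eq_dist hne L
  exact ⟨L₁, hL₁, by rwa [← dist_eq_norm, ← hd]⟩

section QDQ

variable {E : Type*} [NormedAddCommGroup E] [NormedSpace ℝ E]

/-- The condition of `IsQDQ` at the single scale `δ`, with `r` in place of `ρ δ`. -/
def QDQApprox {F : Type*} [NormedAddCommGroup F] [NormedSpace ℝ F] (Fm : E → Set F) (xb : E)
    (yb : F) (Γ : Set E) (Λ : Set (E →L[ℝ] F)) (δ r : ℝ) : Prop :=
  ∃ (L : E → E →L[ℝ] F) (h : E → F),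
    ContinuousOn (fun x => (L x, h x)) (closedBall xb δ ∩ Γ) ∧
    ∀ x ∈ closedBall xb δ ∩ Γ,
      infDist (L x) Λ ≤ r ∧ ‖h x‖ ≤ δ * r ∧ yb + (L x) (x - xb) + h x ∈ Fm x

lemma QDQApprox.mono {F : Type*} [NormedAddCommGroup F] [NormedSpace ℝ F] {Fm : E → Set F}
    {xb : E} {yb : F} {Γ : Set E} {Λ : Set (E →L[ℝ] F)} {δ r r' : ℝ}
    (h : QDQApprox Fm xb yb Γ Λ δ r) (hr : r ≤ r') (hδ : 0 ≤ δ) :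
    QDQApprox Fm xb yb Γ Λ δ r' := by
  obtain ⟨L, h, hc, hest⟩ := h
  refine ⟨L, h, hc, fun x hx => ?_⟩
  obtain ⟨hd, hh, hmem⟩ := hest x hx
  exact ⟨hd.trans hr, hh.trans (by gcongr), hmem⟩

lemma infDist_product_linearization_le {ΛF ΛG : Set (E →L[ℝ] ℝ)} (hΛF : IsCompact ΛF)
    (hΛG : IsCompact ΛG) {ybF ybG M δ r : ℝ} (hMF : ∀ L ∈ ΛF, ‖L‖ ≤ M)
    (hMG : ∀ L ∈ ΛG, ‖L‖ ≤ M) (hM : 0 ≤ M) {LF LG : E →L[ℝ] ℝ} {hF hG : ℝ} {v : E}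
    (hLF : infDist LF ΛF ≤ r) (hLG : infDist LG ΛG ≤ r) (hv : ‖v‖ ≤ δ) (hhF : |hF| ≤ δ * r)
    (hhG : |hG| ≤ δ * r) (hδr : δ ≤ r) :
    infDist ((ybG + LG v + hG) • LF + (ybF + hF) • LG)
      {L | ∃ L₁ ∈ ΛF, ∃ L₂ ∈ ΛG, L = ybF • L₂ + ybG • L₁} ≤
      r * (|ybF| + |ybG| + (M + 3 * r) ^ 2) := by
  have hr : 0 ≤ r := infDist_nonneg.trans hLF
  have hδ : 0 ≤ δ := (norm_nonneg v).trans hv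
  by_cases hne : ΛF.Nonempty ∧ ΛG.Nonempty
  swap
  · have hempty : {L | ∃ L₁ ∈ ΛF, ∃ L₂ ∈ ΛG, L = ybF • L₂ + ybG • L₁} = ∅ := by
      refine eq_empty_of_forall_notMem ?_
      rintro L ⟨L₁, hL₁, L₂, hL₂, -⟩
      exact hne ⟨⟨L₁, hL₁⟩, ⟨L₂, hL₂⟩⟩
    rw [hempty, infDist_empty]
    positivity
  obtain ⟨L₁, hL₁, h₁⟩ := hΛF.exists_norm_sub_le_of_infDist_le hne.1 hLF
  obtain ⟨L₂, hL₂, h₂⟩ := hΛG.exists_norm_sub_le_of_infDist_le hne.2 hLG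
  have hnF : ‖LF‖ ≤ M + r := (norm_le_insert' LF L₁).trans (add_le_add (hMF L₁ hL₁) h₁)
  have hnG : ‖LG‖ ≤ M + r := (norm_le_insert' LG L₂).trans (add_le_add (hMG L₂ hL₂) h₂)
  have hs : |LG v + hG| ≤ δ * (M + 2 * r) :=
    calc |LG v + hG| ≤ ‖LG‖ * ‖v‖ + |hG| := (abs_add_le _ _).trans (by
          rw [← Real.norm_eq_abs (LG v)]; gcongr; exact LG.le_opNorm v)
      _ ≤ (M + r) * δ + δ * r := by gcongr
      _ = δ * (M + 2 * r) := by ring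
  calc infDist _ _
      ≤ dist ((ybG + LG v + hG) • LF + (ybF + hF) • LG) (ybF • L₂ + ybG • L₁) :=
        infDist_le_dist_of_mem (by exact ⟨L₁, hL₁, L₂, hL₂, rfl⟩)
    _ = ‖(LG v + hG) • LF + ybG • (LF - L₁) + hF • LG + ybF • (LG - L₂)‖ := by
        rw [dist_eq_norm]; congr 1; module
    _ ≤ |LG v + hG| * ‖LF‖ + |ybG| * ‖LF - L₁‖ + |hF| * ‖LG‖ + |ybF| * ‖LG - L₂‖ := by
        refine norm_add₄_le.trans_eq ?_
        simp only [norm_smul, Real.norm_eq_abs]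
    _ ≤ δ * (M + 2 * r) * (M + r) + |ybG| * r + δ * r * (M + r) + |ybF| * r := by gcongr
    _ ≤ r * (|ybF| + |ybG| + (M + 3 * r) ^ 2) := by
        have : δ * ((M + r) * (M + 3 * r)) ≤ r * (M + 3 * r) ^ 2 := by
          rw [sq]; gcongr; linarith
        nlinarith

lemma abs_product_remainder_le {ybF ybG hF hG M δ r : ℝ} (hhF : |hF| ≤ δ * r)
    (hhG : |hG| ≤ δ * r) (hM : 0 ≤ M) (hδ : 0 ≤ δ) (hδr : δ ≤ r) :
    |ybF * hG + ybG * hF + hF * hG| ≤ δ * (r * (|ybF| + |ybG| + (M + 3 * r) ^ 2)) := by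
  have hr : 0 ≤ r := hδ.trans hδr
  have hprod : |hF * hG| ≤ δ * r * (δ * r) := by
    rw [abs_mul]; exact mul_le_mul hhF hhG (abs_nonneg _) (by positivity)
  calc |ybF * hG + ybG * hF + hF * hG| ≤ |ybF| * |hG| + |ybG| * |hF| + |hF * hG| := by
        simpa only [abs_mul] using abs_add_three (ybF * hG) (ybG * hF) (hF * hG)
    _ ≤ |ybF| * (δ * r) + |ybG| * (δ * r) + δ * r * (δ * r) := by gcongr
    _ ≤ δ * (r * (|ybF| + |ybG| + (M + 3 * r) ^ 2)) := by
        have hδr2 : δ * r ≤ (M + 3 * r) ^ 2 := by nlinarith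
        have : δ * r * (δ * r) ≤ δ * (r * (M + 3 * r) ^ 2) := by
          rw [show δ * r * (δ * r) = δ * (r * (δ * r)) by ring]; gcongr
        nlinarith [abs_nonneg ybF]

lemma QDQApprox.mul {F G : E → Set ℝ} {xb : E} {ybF ybG : ℝ} {ΓF ΓG : Set E}
    {ΛF ΛG : Set (E →L[ℝ] ℝ)} {M δ r : ℝ} (hΛF : IsCompact ΛF) (hΛG : IsCompact ΛG)
    (hMF : ∀ L ∈ ΛF, ‖L‖ ≤ M) (hMG : ∀ L ∈ ΛG, ‖L‖ ≤ M) (hM : 0 ≤ M)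
    (hFδ : QDQApprox F xb ybF ΓF ΛF δ r) (hGδ : QDQApprox G xb ybG ΓG ΛG δ r) (hδr : δ ≤ r) :
    QDQApprox (fun x => {y | ∃ y₁ ∈ F x, ∃ y₂ ∈ G x, y = y₁ * y₂}) xb (ybF * ybG) (ΓF ∩ ΓG)
      {L | ∃ L₁ ∈ ΛF, ∃ L₂ ∈ ΛG, L = ybF • L₂ + ybG • L₁} δ
      (r * (|ybF| + |ybG| + (M + 3 * r) ^ 2)) := by
  obtain ⟨LF, hF, hcF, hestF⟩ := hFδ
  obtain ⟨LG, hG, hcG, hestG⟩ := hGδ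
  have hDF : closedBall xb δ ∩ (ΓF ∩ ΓG) ⊆ closedBall xb δ ∩ ΓF :=
    inter_subset_inter_right _ inter_subset_left
  have hDG : closedBall xb δ ∩ (ΓF ∩ ΓG) ⊆ closedBall xb δ ∩ ΓG :=
    inter_subset_inter_right _ inter_subset_right
  have hLF := (hcF.mono hDF).fst
  have hhF := (hcF.mono hDF).snd
  have hLG := (hcG.mono hDG).fst
  have hhG := (hcG.mono hDG).snd
  have hLGv : ContinuousOn (fun x => LG x (x - xb)) (closedBall xb δ ∩ (ΓF ∩ ΓG)) :=
    hLG.clm_apply (by fun_prop)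
  refine ⟨fun x => (ybG + LG x (x - xb) + hG x) • LF x + (ybF + hF x) • LG x,
    fun x => ybF * hG x + ybG * hF x + hF x * hG x, ?_, fun x hx => ?_⟩
  · exact ((((continuousOn_const.add hLGv).add hhG).smul hLF).add
      ((continuousOn_const.add hhF).smul hLG)).prodMk
      (((continuousOn_const.mul hhG).add (continuousOn_const.mul hhF)).add (hhF.mul hhG))
  · obtain ⟨hdF, hnF, hyF⟩ := hestF x (hDF hx)
    obtain ⟨hdG, hnG, hyG⟩ := hestG x (hDG hx)
    rw [Real.norm_eq_abs] at hnF hnG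
    have hv : ‖x - xb‖ ≤ δ := mem_closedBall_iff_norm.mp hx.1
    refine ⟨infDist_product_linearization_le hΛF hΛG hMF hMG hM hdF hdG hv hnF hnG hδr,
      (Real.norm_eq_abs _).trans_le
        (abs_product_remainder_le hnF hnG hM ((norm_nonneg _).trans hv) hδr),
      _, hyF, _, hyG, ?_⟩
    simp only [add_apply, smul_apply, smul_eq_mul]
    ring

theorem IsQDQ.mul {F G : E → Set ℝ} {xb : E} {ybF ybG : ℝ} {ΓF ΓG : Set E}
    {ΛF ΛG : Set (E →L[ℝ] ℝ)} (hF : IsQDQ F xb ybF ΓF ΛF) (hG : IsQDQ G xb ybG ΓG ΛG) :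
    IsQDQ (fun x => {y | ∃ y₁ ∈ F x, ∃ y₂ ∈ G x, y = y₁ * y₂}) xb (ybF * ybG) (ΓF ∩ ΓG)
      {L | ∃ L₁ ∈ ΛF, ∃ L₂ ∈ ΛG, L = ybF • L₂ + ybG • L₁} := by
  obtain ⟨hΛF, δF, hδF, ρF, hρF, hselF⟩ := hF
  obtain ⟨hΛG, δG, hδG, ρG, hρG, hselG⟩ := hG
  obtain ⟨M, hM, hMΛ⟩ := (hΛF.union hΛG).isBounded.exists_pos_norm_le
  set σ : ℝ → ℝ := fun δ => ρF δ + ρG δ + max δ 0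
  have hσ : IsModulus σ := (hρF.add hρG).add isModulus_max_zero
  have hf : Continuous fun s : ℝ => s * (|ybF| + |ybG| + (M + 3 * s) ^ 2) := by fun_prop
  have hρ : IsModulus fun δ => σ δ * (|ybF| + |ybG| + (M + 3 * σ δ) ^ 2) :=
    hσ.comp (by simp) (fun s (hs : 0 ≤ s) t (ht : 0 ≤ t) hst => by gcongr)
      hf.continuousWithinAt
  refine ⟨isCompact_setOf_smul_add_smul hΛF hΛG ybF ybG, min δF δG, lt_min hδF hδG, _, hρ,
    fun δ hδ hδδ => ?_⟩
  have hσδ : σ δ = ρF δ + ρG δ + δ := by simp only [σ, max_eq_left hδ.le]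
  have hsF : QDQApprox F xb ybF ΓF ΛF δ (σ δ) :=
    QDQApprox.mono (hselF δ hδ (hδδ.trans_le (min_le_left _ _)))
      (by linarith [hρG.1 δ]) hδ.le
  have hsG : QDQApprox G xb ybG ΓG ΛG δ (σ δ) :=
    QDQApprox.mono (hselG δ hδ (hδδ.trans_le (min_le_right _ _)))
      (by linarith [hρF.1 δ]) hδ.le
  exact hsF.mul hΛF hΛG (fun L hL => hMΛ L (.inl hL)) (fun L hL => hMΛ L (.inr hL)) hM.le hsG
    (by linarith [hρF.1 δ, hρG.1 δ])

end QDQ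

/-- Product rule for Quasi Differential Quotients. -/
theorem qdq_product_rule {n : ℕ}
    (F G : EuclideanSpace ℝ (Fin n) → Set ℝ)
    (xb : EuclideanSpace ℝ (Fin n)) (ybF ybG : ℝ)
    (ΓF ΓG : Set (EuclideanSpace ℝ (Fin n)))
    (ΛF ΛG : Set (EuclideanSpace ℝ (Fin n) →L[ℝ] ℝ))
    (hF : IsQDQ F xb ybF ΓF ΛF) (hG : IsQDQ G xb ybG ΓG ΛG) :
    IsQDQ (fun x => {y | ∃ y₁ ∈ F x, ∃ y₂ ∈ G x, y = y₁ * y₂})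
      xb (ybF * ybG) (ΓF ∩ ΓG)
      {L | ∃ L₁ ∈ ΛF, ∃ L₂ ∈ ΛG, L = ybF • L₂ + ybG • L₁} :=
  hF.mul hG
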